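/- For the multi-channel convex hull characterization: $\mathrm{Conv}(\mathcal{B}_0^t(\bar{x})) = \mathcal{D} \cap \widetilde{\mathcal{B}}_{1,\infty}^t(\bar{x})$, where the $\ell_0$-ball perturbs up to $t$ entries across all of their $d$ channels. -/

import Mathlib

open scoped ENNReal

noncomputable def deltaE2 {k d : ℕ} (a b x : Fin k → Fin d → ℝ) (i : Fin k) (j : Fin d)
    (y : Fin k → Fin d → ℝ) : ℝ≥0∞ :=
  if y i j = x i j then 0
  else if x i j < y i j then
    (if b i j = x i j then ⊤ else ENNReal.ofReal ((y i j - x i j) / (b i j - x i j)))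
  else (if a i j = x i j then ⊤ else ENNReal.ofReal ((y i j - x i j) / (a i j - x i j)))

/-!
On the box, `δ^{i,j}` is the real gauge `u ↦ max ((β - ξ)⁻¹ (u - ξ)) ((α - ξ)⁻¹ (u - ξ))`, a
maximum of two linear functions. Hence `Φ y = ∑ i, max_j δ^{i,j}(y)` is convex, it is at most the
number of blocks where `y` differs from `x`, and the box cut by `Φ ≤ t` is a convex set containing
the `ℓ₀`-ball.

Conversely, let `y` be in that set, with block gauges `s i ∈ [0, 1]` and `∑ i, s i ≤ t`. The
points `v i = x i + (s i)⁻¹ (y i - x i)` stay in the box, and `y` is the image of `s` under the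
affine map `σ ↦ (x i + σ i (v i - x i))_i`. The cube `[0, 1]^k` cut by `∑ σ ≤ t` has only 0/1
extreme points: a fractional coordinate can be pushed both ways, alone if `∑ σ < t`, and against
a second fractional coordinate if `∑ σ = t` (one exists because `t` is an integer). By
Krein–Milman `s` is a convex combination of 0/1 vectors with at most `t` ones, and the affine map
sends those into the `ℓ₀`-ball.
-/

open Set

-- The gauge of `[α, β]` around `ξ`. If `ξ` is an endpoint, `0⁻¹ = 0` turns the slope towards
-- that endpoint into `0`, which is the value needed there since `u` never leaves `[α, β]`.
noncomputable def intervalGauge (α β ξ u : ℝ) : ℝ :=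
  max ((β - ξ)⁻¹ * (u - ξ)) ((α - ξ)⁻¹ * (u - ξ))

section intervalGauge

variable {α β ξ u s : ℝ}

theorem intervalGauge_self : intervalGauge α β ξ ξ = 0 := by
  simp [intervalGauge]

theorem convexOn_intervalGauge (α β ξ : ℝ) : ConvexOn ℝ univ (intervalGauge α β ξ) := by
  have affine (c : ℝ) : ConvexOn ℝ univ fun u : ℝ => c * (u - ξ) :=
    ⟨convex_univ, fun _ _ _ _ p q _ _ hpq => le_of_eq <| by
      simp only [smul_eq_mul]; linear_combination (c * ξ) * hpq⟩
  exact (affine _).sup (affine _)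

theorem intervalGauge_nonneg (hαξ : α ≤ ξ) (hξβ : ξ ≤ β) : 0 ≤ intervalGauge α β ξ u := by
  rcases le_total ξ u with h | h
  · exact le_max_of_le_left (mul_nonneg (inv_nonneg.2 (sub_nonneg.2 hξβ)) (sub_nonneg.2 h))
  · exact le_max_of_le_right
      (mul_nonneg_of_nonpos_of_nonpos (inv_nonpos.2 (sub_nonpos.2 hαξ)) (sub_nonpos.2 h))

theorem intervalGauge_of_lt (hαξ : α ≤ ξ) (hξβ : ξ ≤ β) (h : ξ < u) :
    intervalGauge α β ξ u = (u - ξ) / (β - ξ) := by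
  rw [intervalGauge, max_eq_left, inv_mul_eq_div]
  exact (mul_nonpos_of_nonpos_of_nonneg (inv_nonpos.2 (sub_nonpos.2 hαξ)) (sub_nonneg.2 h.le))
    |>.trans (mul_nonneg (inv_nonneg.2 (sub_nonneg.2 hξβ)) (sub_nonneg.2 h.le))

theorem intervalGauge_of_gt (hαξ : α ≤ ξ) (hξβ : ξ ≤ β) (h : u < ξ) :
    intervalGauge α β ξ u = (u - ξ) / (α - ξ) := by
  rw [intervalGauge, max_eq_right, inv_mul_eq_div]
  exact (mul_nonpos_of_nonneg_of_nonpos (inv_nonneg.2 (sub_nonneg.2 hξβ)) (sub_nonpos.2 h.le))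
    |>.trans (mul_nonneg_of_nonpos_of_nonpos (inv_nonpos.2 (sub_nonpos.2 hαξ)) (sub_nonpos.2 h.le))

theorem intervalGauge_le_one (hαξ : α ≤ ξ) (hξβ : ξ ≤ β) (hu : u ∈ Icc α β) :
    intervalGauge α β ξ u ≤ 1 := by
  rcases lt_trichotomy u ξ with h | rfl | h
  · rw [intervalGauge_of_gt hαξ hξβ h, div_le_one_of_neg (by linarith [hu.1])]
    linarith [hu.1]
  · rw [intervalGauge_self]; exact zero_le_one
  · rw [intervalGauge_of_lt hαξ hξβ h, div_le_one (by linarith [hu.2])]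
    linarith [hu.2]

theorem eq_of_intervalGauge_nonpos (hαξ : α ≤ ξ) (hξβ : ξ ≤ β) (hu : u ∈ Icc α β)
    (h : intervalGauge α β ξ u ≤ 0) : u = ξ := by
  rcases lt_trichotomy u ξ with hlt | heq | hgt
  · rw [intervalGauge_of_gt hαξ hξβ hlt] at h
    exact absurd h (div_pos_of_neg_of_neg (by linarith) (by linarith [hu.1])).not_ge
  · exact heq
  · rw [intervalGauge_of_lt hαξ hξβ hgt] at h
    exact absurd h (div_pos (by linarith) (by linarith [hu.2])).not_ge

theorem mul_inv_mul_sub_of_intervalGauge_le (hαξ : α ≤ ξ) (hξβ : ξ ≤ β) (hu : u ∈ Icc α β)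
    (h : intervalGauge α β ξ u ≤ s) : s * (s⁻¹ * (u - ξ)) = u - ξ := by
  rcases eq_or_ne s 0 with rfl | hs
  · simp [eq_of_intervalGauge_nonpos hαξ hξβ hu h]
  · exact mul_inv_cancel_left₀ hs _

theorem add_inv_mul_sub_mem_Icc_of_intervalGauge_le (hαξ : α ≤ ξ) (hξβ : ξ ≤ β)
    (hu : u ∈ Icc α β) (h : intervalGauge α β ξ u ≤ s) : ξ + s⁻¹ * (u - ξ) ∈ Icc α β := by
  rcases (intervalGauge_nonneg hαξ hξβ).trans h |>.eq_or_lt with rfl | hs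
  · simpa using ⟨hαξ, hξβ⟩
  rw [mem_Icc, ← sub_le_iff_le_add', ← le_sub_iff_add_le', le_inv_mul_iff₀ hs,
    inv_mul_le_iff₀ hs]
  rcases lt_trichotomy u ξ with hlt | heq | hgt
  · rw [intervalGauge_of_gt hαξ hξβ hlt, div_le_iff_of_neg (by linarith [hu.1])] at h
    constructor <;> nlinarith
  · constructor <;> nlinarith
  · rw [intervalGauge_of_lt hαξ hξβ hgt, div_le_iff₀ (by linarith [hu.2])] at h
    constructor <;> nlinarith

end intervalGauge

section blockGauge

variable {ι κ : Type*} [Fintype κ] [Nonempty κ] {a b x : ι → κ → ℝ} {i : ι} {y : ι → κ → ℝ}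

variable (a b x) in
noncomputable def blockGauge (i : ι) (y : ι → κ → ℝ) : ℝ :=
  Finset.univ.sup' Finset.univ_nonempty fun j => intervalGauge (a i j) (b i j) (x i j) (y i j)

variable (a b x) in
theorem convexOn_blockGauge (i : ι) : ConvexOn ℝ univ (blockGauge a b x i) := by
  have hsup : blockGauge a b x i = Finset.univ.sup' Finset.univ_nonempty
      fun j y => intervalGauge (a i j) (b i j) (x i j) (y i j) := by
    funext y; simp only [blockGauge, Finset.sup'_apply]
  rw [hsup]
  refine Finset.sup'_induction _ _ (fun _ hf _ hg => hf.sup hg) fun j _ => ?_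
  exact (convexOn_intervalGauge _ _ _).comp_linearMap
    ((LinearMap.proj j).comp (LinearMap.proj (R := ℝ) (φ := fun _ : ι => κ → ℝ) i))

theorem intervalGauge_le_blockGauge (j : κ) :
    intervalGauge (a i j) (b i j) (x i j) (y i j) ≤ blockGauge a b x i y :=
  Finset.le_sup' (fun j => intervalGauge (a i j) (b i j) (x i j) (y i j)) (Finset.mem_univ j)

theorem blockGauge_nonneg (hx : x ∈ Icc a b) : 0 ≤ blockGauge a b x i y :=
  (intervalGauge_nonneg (hx.1 i _) (hx.2 i _)).trans
    (intervalGauge_le_blockGauge (Classical.arbitrary κ))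

theorem blockGauge_le_one (hx : x ∈ Icc a b) (hy : y ∈ Icc a b) : blockGauge a b x i y ≤ 1 :=
  Finset.sup'_le _ _ fun j _ => intervalGauge_le_one (hx.1 i j) (hx.2 i j) ⟨hy.1 i j, hy.2 i j⟩

theorem blockGauge_of_eq (h : y i = x i) : blockGauge a b x i y = 0 := by
  simp [blockGauge, h, intervalGauge_self]

end blockGauge

section channelGauge

variable {ι κ : Type*} [Fintype ι] [Fintype κ] [Nonempty κ] {a b x y : ι → κ → ℝ}

variable (a b x) in
noncomputable def channelGauge (y : ι → κ → ℝ) : ℝ :=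
  ∑ i, blockGauge a b x i y

variable (a b x) in
theorem convexOn_channelGauge : ConvexOn ℝ univ (channelGauge a b x) := by
  have hsum : channelGauge a b x = ∑ i, blockGauge a b x i := by
    funext y; simp only [channelGauge, Finset.sum_apply]
  rw [hsum]
  exact Finset.sum_induction _ _ (fun _ _ hf hg => hf.add hg) (convexOn_const 0 convex_univ)
    fun i _ => convexOn_blockGauge a b x i

theorem channelGauge_le_card [DecidableEq (κ → ℝ)] (hx : x ∈ Icc a b) (hy : y ∈ Icc a b) :
    channelGauge a b x y ≤ (Finset.univ.filter fun i => y i ≠ x i).card := by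
  rw [Finset.natCast_card_filter]
  refine Finset.sum_le_sum fun i _ => ?_
  split_ifs with h
  · exact blockGauge_le_one hx hy
  · exact (blockGauge_of_eq (not_not.1 h)).le

end channelGauge

theorem eq_zero_of_add_mem_of_sub_mem_of_mem_extremePoints {E : Type*} [AddCommGroup E]
    [Module ℝ E] {A : Set E} {x u : E} (hx : x ∈ A.extremePoints ℝ) (h₁ : x + u ∈ A)
    (h₂ : x - u ∈ A) : u = 0 :=
  add_eq_left.1 (hx.2 h₁ h₂ (mem_openSegment_add_sub x u))

theorem Finset.sum_eq_card_filter_ne_zero {ι : Type*} {σ : ι → ℝ} {s : Finset ι}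
    (h : ∀ i ∈ s, σ i = 0 ∨ σ i = 1) : ∑ i ∈ s, σ i = (s.filter fun i => σ i ≠ 0).card := by
  rw [Finset.natCast_card_filter]
  refine Finset.sum_congr rfl fun i hi => ?_
  rcases h i hi with h | h <;> simp [h]

section truncatedCube

variable {ι : Type*} [Fintype ι] {t : ℕ} {σ : ι → ℝ}

variable (ι t) in
def truncatedCube : Set (ι → ℝ) :=
  Icc 0 1 ∩ {σ | ∑ i, σ i ≤ t}

theorem isCompact_truncatedCube : IsCompact (truncatedCube ι t) :=
  isCompact_Icc.inter_right <|
    isClosed_le (continuous_finsetSum _ fun i _ => continuous_apply i) continuous_const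

theorem convex_truncatedCube : Convex ℝ (truncatedCube ι t) :=
  (convex_Icc 0 1).inter <| convex_halfSpace_le
    ⟨fun _ _ => Finset.sum_add_distrib, fun _ _ => (Finset.mul_sum _ _ _).symm⟩ _

theorem exists_ne_fractional_of_sum_eq {i : ι} (hσ : ∑ l, σ l = t) (hi₀ : 0 < σ i)
    (hi₁ : σ i < 1) : ∃ j ≠ i, σ j ≠ 0 ∧ σ j ≠ 1 := by
  classical
  by_contra! h
  obtain ⟨n, hn⟩ : ∃ n : ℕ, σ i + n = t := by
    rw [← hσ, ← Finset.add_sum_erase _ _ (Finset.mem_univ i), Finset.sum_eq_card_filter_ne_zero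
      fun l hl => or_iff_not_imp_left.2 (h l (Finset.ne_of_mem_erase hl))]
    exact ⟨_, rfl⟩
  have hlt : n < t := by exact_mod_cast (by linarith : (n : ℝ) < t)
  have hgt : t < n + 1 := by exact_mod_cast (by linarith : (t : ℝ) < n + 1)
  omega

theorem exists_add_sub_mem_truncatedCube_of_sum_lt [DecidableEq ι] {i : ι} (hσ : σ ∈ truncatedCube ι t)
    (hlt : ∑ l, σ l < t) (hi₀ : 0 < σ i) (hi₁ : σ i < 1) :
    ∃ u ≠ 0, σ + u ∈ truncatedCube ι t ∧ σ - u ∈ truncatedCube ι t := by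
  obtain ⟨ε, hε, hεi₀, hεi₁, hεt⟩ : ∃ ε > 0, ε ≤ σ i ∧ ε ≤ 1 - σ i ∧ ε ≤ t - ∑ l, σ l :=
    ⟨min (min (σ i) (1 - σ i)) (t - ∑ l, σ l), by simp [hi₀, hi₁, hlt],
      by simp, by simp, min_le_right _ _⟩
  have hbd : ∀ l, 0 ≤ σ l ∧ σ l ≤ 1 := fun l => ⟨hσ.1.1 l, hσ.1.2 l⟩
  refine ⟨Pi.single i ε, by simpa using hε.ne', ⟨⟨fun l => ?_, fun l => ?_⟩, ?_⟩,
    ⟨⟨fun l => ?_, fun l => ?_⟩, ?_⟩⟩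
  all_goals first
    | (rcases eq_or_ne l i with rfl | hl
       · simp; linarith
       · simp [hl]; linarith [hbd l])
    | (simp [Finset.sum_add_distrib, Finset.sum_sub_distrib]; linarith)

theorem exists_add_sub_mem_truncatedCube_of_ne [DecidableEq ι] {i j : ι} (hji : j ≠ i) (hσ : σ ∈ truncatedCube ι t)
    (hi₀ : 0 < σ i) (hi₁ : σ i < 1) (hj₀ : 0 < σ j) (hj₁ : σ j < 1) :
    ∃ u ≠ 0, σ + u ∈ truncatedCube ι t ∧ σ - u ∈ truncatedCube ι t := by
  obtain ⟨ε, hε, hεi₀, hεi₁, hεj₀, hεj₁⟩ :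
      ∃ ε > 0, ε ≤ σ i ∧ ε ≤ 1 - σ i ∧ ε ≤ σ j ∧ ε ≤ 1 - σ j :=
    ⟨min (min (σ i) (1 - σ i)) (min (σ j) (1 - σ j)), by simp [hi₀, hi₁, hj₀, hj₁],
      by simp, by simp, by simp, by simp⟩
  have hbd : ∀ l, 0 ≤ σ l ∧ σ l ≤ 1 := fun l => ⟨hσ.1.1 l, hσ.1.2 l⟩
  refine ⟨Pi.single i ε - Pi.single j ε, fun h => hε.ne' ?_,
    ⟨⟨fun l => ?_, fun l => ?_⟩, ?_⟩, ⟨⟨fun l => ?_, fun l => ?_⟩, ?_⟩⟩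
  · simpa [hji.symm] using congrFun h i
  all_goals first
    | (rcases eq_or_ne l i with rfl | hli
       · simp [hji]; linarith
       · rcases eq_or_ne l j with rfl | hlj
         · simp [hli]; linarith
         · simp [hli, hlj]; linarith [hbd l])
    | (simpa [Finset.sum_add_distrib, Finset.sum_sub_distrib] using hσ.2)

theorem extremePoints_truncatedCube_subset :
    (truncatedCube ι t).extremePoints ℝ ⊆ {σ | ∀ i, σ i = 0 ∨ σ i = 1} := by
  classical
  intro σ hσ i
  by_contra! hfrac
  have hi₀ : 0 < σ i := lt_of_le_of_ne (hσ.1.1.1 i) hfrac.1.symm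
  have hi₁ : σ i < 1 := lt_of_le_of_ne (hσ.1.1.2 i) hfrac.2
  obtain ⟨u, hu, hadd, hsub⟩ : ∃ u ≠ 0, σ + u ∈ truncatedCube ι t ∧ σ - u ∈ truncatedCube ι t := by
    rcases (show ∑ l, σ l ≤ t from hσ.1.2).lt_or_eq with hlt | heq
    · exact exists_add_sub_mem_truncatedCube_of_sum_lt hσ.1 hlt hi₀ hi₁
    · obtain ⟨j, hji, hj⟩ := exists_ne_fractional_of_sum_eq heq hi₀ hi₁
      exact exists_add_sub_mem_truncatedCube_of_ne hji hσ.1 hi₀ hi₁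
        (lt_of_le_of_ne (hσ.1.1.1 j) hj.1.symm) (lt_of_le_of_ne (hσ.1.1.2 j) hj.2)
  exact hu (eq_zero_of_add_mem_of_sub_mem_of_mem_extremePoints hσ hadd hsub)

theorem truncatedCube_subset_convexHull :
    truncatedCube ι t ⊆ convexHull ℝ {σ ∈ truncatedCube ι t | ∀ i, σ i = 0 ∨ σ i = 1} := by
  have hfinite : {σ ∈ truncatedCube ι t | ∀ i, σ i = 0 ∨ σ i = 1}.Finite :=
    (Set.Finite.pi' fun _ => (Set.toFinite {0, 1})).subset fun σ hσ i => hσ.2 i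
  intro σ hσ
  rw [← closure_convexHull_extremePoints isCompact_truncatedCube convex_truncatedCube] at hσ
  have hext : (truncatedCube ι t).extremePoints ℝ ⊆
      {σ ∈ truncatedCube ι t | ∀ i, σ i = 0 ∨ σ i = 1} :=
    fun τ hτ => ⟨extremePoints_subset hτ, extremePoints_truncatedCube_subset hτ⟩
  exact closure_minimal (convexHull_mono hext) (hfinite.isCompact_convexHull ℝ).isClosed hσ

end truncatedCube

section l0Ball

variable {ι κ : Type*} [Fintype ι] [Fintype κ] [Nonempty κ] [DecidableEq (κ → ℝ)]
  {a b x : ι → κ → ℝ} {t : ℕ}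

variable (a b x t) in
def l0Ball : Set (ι → κ → ℝ) :=
  {y ∈ Icc a b | (Finset.univ.filter fun i => y i ≠ x i).card ≤ t}

theorem convexHull_l0Ball_subset (hx : x ∈ Icc a b) :
    convexHull ℝ (l0Ball a b x t) ⊆ {y ∈ Icc a b | channelGauge a b x y ≤ t} :=
  convexHull_min (fun y hy => ⟨hy.1, (channelGauge_le_card hx hy.1).trans (by exact_mod_cast hy.2)⟩)
    (((convexOn_channelGauge a b x).subset (subset_univ _) (convex_Icc a b)).convex_le t)

theorem subset_convexHull_l0Ball (hx : x ∈ Icc a b) :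
    {y ∈ Icc a b | channelGauge a b x y ≤ t} ⊆ convexHull ℝ (l0Ball a b x t) := by
  rintro y ⟨hy, hyt⟩
  set s : ι → ℝ := fun i => blockGauge a b x i y
  -- When `s i = 0`, the junk value `0⁻¹ = 0` makes `v i = x i`, and then `y i = x i` too.
  set v : ι → κ → ℝ := fun i j => x i j + (s i)⁻¹ * (y i j - x i j)
  let f : (ι → ℝ) →ᵃ[ℝ] ι → κ → ℝ :=
    AffineMap.pi fun i => (AffineMap.lineMap (x i) (v i)).comp (AffineMap.proj i)
  have hf (σ : ι → ℝ) (i : ι) (j : κ) : f σ i j = σ i * (v i j - x i j) + x i j := by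
    simp [f, AffineMap.lineMap_apply]
  have hgauge (i : ι) (j : κ) : intervalGauge (a i j) (b i j) (x i j) (y i j) ≤ s i :=
    intervalGauge_le_blockGauge j
  have hs : s ∈ truncatedCube ι t :=
    ⟨⟨fun i => blockGauge_nonneg hx, fun i => blockGauge_le_one hx hy⟩, hyt⟩
  have hv (i : ι) (j : κ) : v i j ∈ Icc (a i j) (b i j) :=
    add_inv_mul_sub_mem_Icc_of_intervalGauge_le (hx.1 i j) (hx.2 i j) ⟨hy.1 i j, hy.2 i j⟩
      (hgauge i j)
  have hfs : f s = y := by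
    funext i j
    rw [hf, add_sub_cancel_left, mul_inv_mul_sub_of_intervalGauge_le (hx.1 i j) (hx.2 i j)
      ⟨hy.1 i j, hy.2 i j⟩ (hgauge i j), sub_add_cancel]
  have himage : f '' {σ ∈ truncatedCube ι t | ∀ i, σ i = 0 ∨ σ i = 1} ⊆ l0Ball a b x t := by
    rintro _ ⟨σ, ⟨hσ, hσ01⟩, rfl⟩
    refine ⟨⟨fun i j => ?_, fun i j => ?_⟩, ?_⟩
    · rcases hσ01 i with h | h <;> simp [hf, h, hx.1 i j, (hv i j).1]
    · rcases hσ01 i with h | h <;> simp [hf, h, hx.2 i j, (hv i j).2]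
    · have hsupp : (Finset.univ.filter fun i => f σ i ≠ x i) ⊆
          Finset.univ.filter fun i => σ i ≠ 0 :=
        Finset.monotone_filter_right _ fun i _ h h0 => h (funext fun j => by simp [hf, h0])
      have hcard := Finset.sum_eq_card_filter_ne_zero (s := Finset.univ) fun i _ => hσ01 i
      have hsum : ∑ i, σ i ≤ t := hσ.2
      rw [hcard] at hsum
      exact (Finset.card_le_card hsupp).trans (by exact_mod_cast hsum)
  have hmem := mem_image_of_mem f (truncatedCube_subset_convexHull hs)
  rw [f.image_convexHull, hfs] at hmem
  exact convexHull_mono himage hmem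

end l0Ball

section deltaE2

variable {k d : ℕ} {a b x y : Fin k → Fin d → ℝ}

theorem deltaE2_eq_ofReal_intervalGauge {i : Fin k} {j : Fin d}
    (hx : x i j ∈ Icc (a i j) (b i j)) (hy : y i j ∈ Icc (a i j) (b i j)) :
    deltaE2 a b x i j y = ENNReal.ofReal (intervalGauge (a i j) (b i j) (x i j) (y i j)) := by
  rcases lt_trichotomy (y i j) (x i j) with h | h | h
  · have ha : a i j ≠ x i j := (hy.1.trans_lt h).ne
    rw [deltaE2, if_neg h.ne, if_neg (not_lt.2 h.le), if_neg ha,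
      intervalGauge_of_gt hx.1 hx.2 h]
  · rw [deltaE2, if_pos h, h, intervalGauge_self, ENNReal.ofReal_zero]
  · have hb : b i j ≠ x i j := (h.trans_le hy.2).ne'
    rw [deltaE2, if_neg h.ne', if_pos h, if_neg hb, intervalGauge_of_lt hx.1 hx.2 h]

theorem sum_sup_deltaE2_eq_ofReal_channelGauge [NeZero d] (hx : x ∈ Icc a b)
    (hy : y ∈ Icc a b) :
    ∑ i, Finset.univ.sup (fun j => deltaE2 a b x i j y) = ENNReal.ofReal (channelGauge a b x y) := by
  rw [channelGauge, ENNReal.ofReal_sum_of_nonneg fun i _ => blockGauge_nonneg hx]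
  refine Finset.sum_congr rfl fun i _ => ?_
  rw [blockGauge, Finset.apply_sup'_eq_sup'_comp _ _ fun _ _ => ENNReal.ofReal_max _ _,
    Finset.sup'_eq_sup]
  exact Finset.sup_congr rfl fun j _ =>
    deltaE2_eq_ofReal_intervalGauge ⟨hx.1 i j, hx.2 i j⟩ ⟨hy.1 i j, hy.2 i j⟩

end deltaE2

theorem convexHull_multiChannel_l0Ball_general {k d : ℕ} (hd : 1 ≤ d) (t : ℕ)
    (a b x : Fin k → Fin d → ℝ) (hx : ∀ i j, a i j ≤ x i j ∧ x i j ≤ b i j) :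
    convexHull ℝ
        {y : Fin k → Fin d → ℝ | (∀ i j, y i j ∈ Set.Icc (a i j) (b i j)) ∧
          (Finset.univ.filter (fun i => y i ≠ x i)).card ≤ t} =
      {y : Fin k → Fin d → ℝ | ∀ i j, y i j ∈ Set.Icc (a i j) (b i j)} ∩
        {y : Fin k → Fin d → ℝ |
          ∑ i, Finset.univ.sup (fun j => deltaE2 a b x i j y) ≤ (t : ℝ≥0∞)} := by
  have : NeZero d := ⟨by omega⟩
  have hbox (y : Fin k → Fin d → ℝ) : (∀ i j, y i j ∈ Icc (a i j) (b i j)) ↔ y ∈ Icc a b := by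
    simp only [mem_Icc, Pi.le_def, forall_and]
  have hx' : x ∈ Icc a b := ⟨fun i j => (hx i j).1, fun i j => (hx i j).2⟩
  have hrhs : {y | ∀ i j, y i j ∈ Icc (a i j) (b i j)} ∩
      {y | ∑ i, Finset.univ.sup (fun j => deltaE2 a b x i j y) ≤ (t : ℝ≥0∞)} =
      {y ∈ Icc a b | channelGauge a b x y ≤ t} := by
    ext y
    simp only [mem_inter_iff, mem_ofPred_eq, hbox]
    exact and_congr_right fun hy => by
      rw [sum_sup_deltaE2_eq_ofReal_channelGauge hx' hy, ENNReal.ofReal_le_natCast]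
  have hlhs : {y | (∀ i j, y i j ∈ Icc (a i j) (b i j)) ∧
      (Finset.univ.filter (fun i => y i ≠ x i)).card ≤ t} = l0Ball a b x t := by
    simp only [hbox]; rfl
  rw [hlhs, hrhs]
  exact (convexHull_l0Ball_subset hx').antisymm (subset_convexHull_l0Ball hx')

/-- Multi-channel convex hull characterization:
`Conv(B₀ᵗ(x)) = D ∩ B̃_{1,∞}ᵗ(x)`. -/
theorem convexHull_multiChannel_l0Ball {k d : ℕ} (hk : 1 ≤ k) (hd : 1 ≤ d)
    (t : ℕ) (ht : 1 ≤ t) (htk : t ≤ k)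
    (a b x : Fin k → Fin d → ℝ) (hab : ∀ i j, a i j ≤ b i j)
    (hx : ∀ i j, a i j ≤ x i j ∧ x i j ≤ b i j) :
    convexHull ℝ
        {y : Fin k → Fin d → ℝ | (∀ i j, y i j ∈ Set.Icc (a i j) (b i j)) ∧
          (Finset.univ.filter (fun i => y i ≠ x i)).card ≤ t} =
      {y : Fin k → Fin d → ℝ | ∀ i j, y i j ∈ Set.Icc (a i j) (b i j)} ∩
        {y : Fin k → Fin d → ℝ |
          ∑ i, Finset.univ.sup (fun j => deltaE2 a b x i j y) ≤ (t : ℝ≥0∞)} :=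
  convexHull_multiChannel_l0Ball_general hd t a b x hx
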